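/- arXiv:2402.15156 — 3 statements merged into one kernel-verified Lean document; each statement's English description precedes it below -/
import Mathlib

section
/- For the inhomogeneous mass function F(r) = M₀ r³ - M₃ r⁶ with M₀ > 0, the limit as r → 0 of (-2/3 + √r (3F(r) - r F'(r)) / (3 F(r)^(3/2) F'(r)) · d r/dR terms), expressed as the tangent dt_ah/dR at r = 0, equals (1/3)(-2 + M₃/M₀^(5/2)). -/
open Real Filter

/-- For `F(r) = M₀ r³ - M₃ r⁶` with `M₀ > 0`, the central tangent of the apparent horizon
curve, `dt_ah/dR = lim_{r→0⁺} t_ah'(r)/F'(r)` (since `R = F(r)` on the horizon), equals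
`(1/3)(-2 + M₃/M₀^(5/2))`. -/
theorem ltb_central_apparent_horizon_tangent (M₀ M₃ : ℝ) (hM₀ : 0 < M₀) :
    Filter.Tendsto
      (fun r : ℝ =>
        deriv (fun s : ℝ =>
          2 * s ^ ((3:ℝ)/2) / (3 * Real.sqrt (M₀ * s ^ 3 - M₃ * s ^ 6)) -
            (2/3) * (M₀ * s ^ 3 - M₃ * s ^ 6)) r /
        deriv (fun s : ℝ => M₀ * s ^ 3 - M₃ * s ^ 6) r)
      (nhdsWithin 0 (Set.Ioi 0))
      (nhds ((1/3) * (-2 + M₃ / M₀ ^ ((5:ℝ)/2)))) := by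
  set φ : ℝ → ℝ := fun r =>
    (M₃ / (Real.sqrt (M₀ - M₃*r^3))^3 - 2*M₀ + 4*M₃*r^3) / (3*(M₀ - 2*M₃*r^3)) with hφdef
  have hw0 : 0 < Real.sqrt M₀ := Real.sqrt_pos.mpr hM₀
  -- value of φ at 0
  have hval : φ 0 = (1/3) * (-2 + M₃ / M₀ ^ ((5:ℝ)/2)) := by
    have h5 : M₀ ^ ((5:ℝ)/2) = (Real.sqrt M₀)^5 := by
      rw [Real.sqrt_eq_rpow, ← Real.rpow_natCast (M₀ ^ ((1:ℝ)/2)) 5,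
        ← Real.rpow_mul hM₀.le]
      norm_num
    have hM₀w : M₀ = (Real.sqrt M₀)^2 := (Real.sq_sqrt hM₀.le).symm
    have h3 : (Real.sqrt M₀)^5 = (Real.sqrt M₀)^3 * M₀ := by
      rw [show (5:ℕ) = 3+2 from rfl, pow_add, Real.sq_sqrt hM₀.le]
    simp only [hφdef]
    norm_num
    rw [h5, h3]
    have hne : (Real.sqrt M₀)^3 ≠ 0 := pow_ne_zero 3 hw0.ne'
    field_simp
    ring
  have hcont : ContinuousAt φ 0 := by
    have h1 : ContinuousAt (fun r : ℝ => M₃ / (Real.sqrt (M₀ - M₃*r^3))^3) 0 :=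
      ContinuousAt.div continuousAt_const (by fun_prop)
        (pow_ne_zero 3 (Real.sqrt_pos.mpr (by simpa using hM₀)).ne')
    apply ContinuousAt.div
    · exact (h1.sub continuousAt_const).add (by fun_prop)
    · fun_prop
    · norm_num; exact hM₀.ne'
  have hφt : Tendsto φ (nhdsWithin 0 (Set.Ioi 0)) (nhds ((1/3) * (-2 + M₃ / M₀ ^ ((5:ℝ)/2)))) := by
    rw [← hval]
    exact hcont.continuousWithinAt.tendsto
  refine hφt.congr' ?_
  -- eventually, the ratio of derivatives equals φ
  have hu : ∀ᶠ r in nhdsWithin (0:ℝ) (Set.Ioi 0), 0 < M₀ - M₃*r^3 := by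
    have : ContinuousAt (fun r : ℝ => M₀ - M₃*r^3) 0 := by fun_prop
    have h := this.eventually_mem (show {x : ℝ | 0 < x} ∈ nhds ((fun r : ℝ => M₀ - M₃*r^3) 0) by
      simp only [mul_zero, pow_succ, pow_zero, one_mul, zero_mul, mul_zero, sub_zero]
      exact lt_mem_nhds (by simpa using hM₀))
    exact (h.filter_mono nhdsWithin_le_nhds)
  have hu2 : ∀ᶠ r in nhdsWithin (0:ℝ) (Set.Ioi 0), 0 < M₀ - 2*M₃*r^3 := by
    have : ContinuousAt (fun r : ℝ => M₀ - 2*M₃*r^3) 0 := by fun_prop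
    have h := this.eventually_mem (show {x : ℝ | 0 < x} ∈ nhds ((fun r : ℝ => M₀ - 2*M₃*r^3) 0) by
      simp only [mul_zero, zero_pow, sub_zero]
      exact lt_mem_nhds (by simpa using hM₀))
    exact (h.filter_mono nhdsWithin_le_nhds)
  have hpos : ∀ᶠ r in nhdsWithin (0:ℝ) (Set.Ioi 0), 0 < r :=
    eventually_mem_nhdsWithin
  filter_upwards [hu, hu2, hpos] with r hur hur2 hr
  -- derivative of F
  have hF : ∀ x : ℝ, HasDerivAt (fun s : ℝ => M₀ * s ^ 3 - M₃ * s ^ 6)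
      (3*M₀*x^2 - 6*M₃*x^5) x := by
    intro x
    have := ((hasDerivAt_pow 3 x).const_mul M₀).sub ((hasDerivAt_pow 6 x).const_mul M₃)
    refine this.congr_deriv ?_
    push_cast
    ring
  have hFderiv : deriv (fun s : ℝ => M₀ * s ^ 3 - M₃ * s ^ 6) r = 3*M₀*r^2 - 6*M₃*r^5 :=
    (hF r).deriv
  -- the simplified t_ah function
  set w := Real.sqrt (M₀ - M₃*r^3) with hwdef
  have hwpos : 0 < w := Real.sqrt_pos.mpr hur
  have hu' : HasDerivAt (fun s : ℝ => M₀ - M₃*s^3) (-(3*M₃*r^2)) r := by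
    have := ((hasDerivAt_pow 3 r).const_mul M₃).const_sub M₀
    refine this.congr_deriv ?_
    push_cast
    ring
  have hsq : HasDerivAt (fun s : ℝ => Real.sqrt (M₀ - M₃*s^3))
      (1/(2*w) * (-(3*M₃*r^2))) r :=
    (Real.hasDerivAt_sqrt hur.ne').comp r hu'
  have hg1 : HasDerivAt (fun s : ℝ => 2/(3*Real.sqrt (M₀-M₃*s^3)))
      ((0 * (3*w) - 2 * (3 * (1/(2*w) * (-(3*M₃*r^2))))) / (3*w)^2) r :=
    (hasDerivAt_const r (2:ℝ)).div (hsq.const_mul 3) (by positivity)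
  have hg : HasDerivAt (fun s : ℝ => 2/(3*Real.sqrt (M₀-M₃*s^3)) - (2/3)*(M₀*s^3 - M₃*s^6))
      ((0 * (3*w) - 2 * (3 * (1/(2*w) * (-(3*M₃*r^2))))) / (3*w)^2
        - (2/3)*(3*M₀*r^2 - 6*M₃*r^5)) r :=
    hg1.sub ((hF r).const_mul (2/3))
  -- the original function agrees with the simplified one near r
  have heq : (fun s : ℝ =>
        2 * s ^ ((3:ℝ)/2) / (3 * Real.sqrt (M₀ * s ^ 3 - M₃ * s ^ 6)) -
          (2/3) * (M₀ * s ^ 3 - M₃ * s ^ 6))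
      =ᶠ[nhds r]
      (fun s : ℝ => 2/(3*Real.sqrt (M₀-M₃*s^3)) - (2/3)*(M₀*s^3 - M₃*s^6)) := by
    have hopen : IsOpen {s : ℝ | 0 < s ∧ 0 < M₀ - M₃*s^3} := by
      apply IsOpen.inter
      · exact isOpen_lt continuous_const continuous_id
      · exact isOpen_lt continuous_const
          (by continuity : Continuous fun s : ℝ => M₀ - M₃*s^3)
    have hmem : r ∈ {s : ℝ | 0 < s ∧ 0 < M₀ - M₃*s^3} := ⟨hr, hur⟩
    filter_upwards [hopen.mem_nhds hmem] with s hs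
    obtain ⟨hs0, hus⟩ := hs
    have h1 : M₀ * s ^ 3 - M₃ * s ^ 6 = s^3 * (M₀ - M₃*s^3) := by ring
    have h2 : s ^ ((3:ℝ)/2) = Real.sqrt (s^3) := by
      rw [Real.sqrt_eq_rpow, ← Real.rpow_natCast s 3, ← Real.rpow_mul hs0.le]
      norm_num
    rw [h1, h2, Real.sqrt_mul (by positivity)]
    have hs3 : 0 < Real.sqrt (s^3) := Real.sqrt_pos.mpr (by positivity)
    have hus' : 0 < Real.sqrt (M₀ - M₃*s^3) := Real.sqrt_pos.mpr hus
    congr 1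
    field_simp
  have hfderiv : deriv (fun s : ℝ =>
        2 * s ^ ((3:ℝ)/2) / (3 * Real.sqrt (M₀ * s ^ 3 - M₃ * s ^ 6)) -
          (2/3) * (M₀ * s ^ 3 - M₃ * s ^ 6)) r
      = (0 * (3*w) - 2 * (3 * (1/(2*w) * (-(3*M₃*r^2))))) / (3*w)^2
        - (2/3)*(3*M₀*r^2 - 6*M₃*r^5) := by
    rw [heq.deriv_eq]
    exact hg.deriv
  rw [hfderiv, hFderiv, hφdef]
  beta_reduce
  rw [← hwdef]
  have hden : (3*M₀*r^2 - 6*M₃*r^5) ≠ 0 := by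
    have : 3*M₀*r^2 - 6*M₃*r^5 = 3*r^2*(M₀ - 2*M₃*r^3) := by ring
    rw [this]
    positivity
  have hur2' := hur2.ne'
  have h3ne : 3*(M₀ - 2*M₃*r^3) ≠ 0 := by positivity
  rw [div_eq_div_iff h3ne hden]
  field_simp
  ring
end

section
/- In homogeneous marginally bound LTB collapse with F(r) = M₀r³, let R(t,r) = r(1 - (3√M₀/2) t)^(2/3) and R' = ∂R/∂r, so that R'(t,r) = (1 - (3√M₀/2) t)^(2/3); then the function t_null(r) = t₀ + (M₀ r³)/12 - (1/2)√M₀ r² (1 - (3√M₀/2) t₀)^(1/3) + r (1 - (3√M₀/2) t₀)^(2/3) satisfies the outgoing null geodesic equation dt_null/dr = R'(t_null(r), r) = (1 - (3√M₀/2) t_null(r))^(2/3) on the region where 1 - (3√M₀/2) t_null(r) > 0. -/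
open Real

/-- Homogeneous marginally bound LTB collapse: the closed-form curve
`t_null(r) = t₀ + M₀r³/12 - (1/2)√M₀ r² u^(1/3) + r u^(2/3)` with `u = 1 - (3√M₀/2)t₀`
solves the outgoing radial null geodesic equation
`dt_null/dr = R'(t_null(r), r) = (1 - (3√M₀/2) t_null(r))^(2/3)` exactly, on the region where
`u > 0` and `√M₀ r/2 < u^(1/3)`. -/
theorem ltb_homogeneous_null_geodesic_solution (M₀ t₀ r : ℝ) (hM₀ : 0 < M₀)
    (hu : 0 < 1 - (3 * Real.sqrt M₀ / 2) * t₀)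
    (hpos : Real.sqrt M₀ * r / 2 < (1 - (3 * Real.sqrt M₀ / 2) * t₀) ^ ((1:ℝ)/3)) :
    HasDerivAt
      (fun s : ℝ =>
        t₀ + M₀ * s ^ 3 / 12
          - (1/2) * Real.sqrt M₀ * s ^ 2 * (1 - (3 * Real.sqrt M₀ / 2) * t₀) ^ ((1:ℝ)/3)
          + s * (1 - (3 * Real.sqrt M₀ / 2) * t₀) ^ ((2:ℝ)/3))
      ((1 - (3 * Real.sqrt M₀ / 2) *
          (t₀ + M₀ * r ^ 3 / 12
            - (1/2) * Real.sqrt M₀ * r ^ 2 * (1 - (3 * Real.sqrt M₀ / 2) * t₀) ^ ((1:ℝ)/3)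
            + r * (1 - (3 * Real.sqrt M₀ / 2) * t₀) ^ ((2:ℝ)/3))) ^ ((2:ℝ)/3))
      r := by
  set m := Real.sqrt M₀ with hm
  set u := 1 - (3 * m / 2) * t₀ with hudef
  set c := u ^ ((1:ℝ)/3) with hcdef
  have hm2 : m ^ 2 = M₀ := Real.sq_sqrt hM₀.le
  have hc3 : c ^ 3 = u := by
    rw [hcdef, ← Real.rpow_natCast (u ^ ((1:ℝ)/3)) 3, ← Real.rpow_mul hu.le]
    norm_num
  have hc2 : c ^ 2 = u ^ ((2:ℝ)/3) := by
    rw [hcdef, ← Real.rpow_natCast (u ^ ((1:ℝ)/3)) 2, ← Real.rpow_mul hu.le]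
    norm_num
  have hx : (0:ℝ) ≤ c - m * r / 2 := by linarith
  have key : (1 - (3 * m / 2) *
      (t₀ + M₀ * r ^ 3 / 12 - 1 / 2 * m * r ^ 2 * c + r * u ^ ((2:ℝ)/3)))
      = (c - m * r / 2) ^ 3 := by
    rw [← hc2, ← hm2]
    have : (1:ℝ) - (3 * m / 2) * t₀ = c ^ 3 := hc3.symm
    nlinarith [this]
  have hval : (1 - (3 * m / 2) *
      (t₀ + M₀ * r ^ 3 / 12 - 1 / 2 * m * r ^ 2 * c + r * u ^ ((2:ℝ)/3)))
      ^ ((2:ℝ)/3) = (c - m * r / 2) ^ 2 := by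
    rw [key, ← Real.rpow_natCast (c - m * r / 2) 3, ← Real.rpow_mul hx]
    norm_num
  rw [hval]
  have hd : HasDerivAt
      (fun s : ℝ => t₀ + M₀ * s ^ 3 / 12 - 1 / 2 * m * s ^ 2 * c + s * u ^ ((2:ℝ)/3))
      (M₀ * (3 * r ^ 2) / 12 - 1 / 2 * m * (2 * r) * c + u ^ ((2:ℝ)/3)) r := by
    have h1 : HasDerivAt (fun s : ℝ => s ^ 3) (3 * r ^ 2) r := by
      simpa using hasDerivAt_pow 3 r
    have h2 : HasDerivAt (fun s : ℝ => s ^ 2) (2 * r) r := by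
      simpa using hasDerivAt_pow 2 r
    have := (((h1.const_mul M₀).div_const 12).const_add t₀).sub
        ((h2.const_mul (1 / 2 * m)).mul_const c) |>.add
        ((hasDerivAt_id r).mul_const (u ^ ((2:ℝ)/3)))
    refine this.congr_deriv ?_
    ring
  convert hd using 1
  rw [← hc2, ← hm2]
  ring
end

section
/- In homogeneous marginally bound LTB collapse with F(r) = M₀r³ and boundary R_b, the event horizon formation time (the time t₀ at which the central null geodesic meets the apparent horizon at the boundary) is t_eh = t_s - (27/12) M₀ R_b³, where t_s = 2/(3√M₀): i.e., with u := 1 - (3√M₀/2)t_eh = (27/8)M₀^(3/2)R_b³, the identity t_eh + M₀R_b³/12 - (1/2)√M₀ R_b² u^(1/3) + R_b u^(2/3) = t_s - (2/3)M₀R_b³ holds. -/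
open Real

/-- Homogeneous marginally bound LTB collapse with `F(r) = M₀r³` and boundary `R_b`: for the
event horizon formation time `t_eh = t_s - (27/12) M₀ R_b³` (with `t_s = 2/(3√M₀)`), the
factor `u = 1 - (3√M₀/2) t_eh` equals `(27/8) M₀^(3/2) R_b³`, and the null geodesic from the
center at time `t_eh` meets the apparent horizon at the boundary:
`t_eh + M₀R_b³/12 - (1/2)√M₀ R_b² u^(1/3) + R_b u^(2/3) = t_s - (2/3)M₀R_b³`. -/
theorem ltb_homogeneous_t_eh (M₀ R_b : ℝ) (hM₀ : 0 < M₀) (hR : 0 ≤ R_b) :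
    (1 - (3 * Real.sqrt M₀ / 2) * (2 / (3 * Real.sqrt M₀) - (27/12) * M₀ * R_b ^ 3)
        = (27/8) * Real.sqrt M₀ ^ 3 * R_b ^ 3) ∧
    ((2 / (3 * Real.sqrt M₀) - (27/12) * M₀ * R_b ^ 3) + M₀ * R_b ^ 3 / 12
        - (1/2) * Real.sqrt M₀ * R_b ^ 2 * ((27/8) * Real.sqrt M₀ ^ 3 * R_b ^ 3) ^ ((1:ℝ)/3)
        + R_b * ((27/8) * Real.sqrt M₀ ^ 3 * R_b ^ 3) ^ ((2:ℝ)/3)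
      = 2 / (3 * Real.sqrt M₀) - (2/3) * M₀ * R_b ^ 3) := by
  set s := Real.sqrt M₀ with hsdef
  have hs : 0 < s := Real.sqrt_pos.mpr hM₀
  have hs2 : s ^ 2 = M₀ := Real.sq_sqrt hM₀.le
  have hx : (0:ℝ) ≤ 3/2 * s * R_b := by positivity
  have hbase : (27/8) * s ^ 3 * R_b ^ 3 = (3/2 * s * R_b) ^ 3 := by ring
  have h13 : ((27/8) * s ^ 3 * R_b ^ 3) ^ ((1:ℝ)/3) = 3/2 * s * R_b := by
    rw [hbase, ← Real.rpow_natCast (3/2 * s * R_b) 3, ← Real.rpow_mul hx]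
    norm_num
  have h23 : ((27/8) * s ^ 3 * R_b ^ 3) ^ ((2:ℝ)/3) = (3/2 * s * R_b) ^ 2 := by
    rw [hbase, ← Real.rpow_natCast (3/2 * s * R_b) 3, ← Real.rpow_mul hx,
      ← Real.rpow_natCast (3/2 * s * R_b) 2]
    norm_num
  rw [← hs2]
  constructor
  · field_simp
    ring
  · rw [h13, h23]
    field_simp
    ring
end
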